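/- arXiv:2410.14902 — 5 statements merged into one kernel-verified Lean document; each statement's English description precedes it below -/
import Mathlib

section
/- The set of points of the geostationary orbit visible from the terminal, {x ∈ C_G : ⟪x − t, t⟫ ≥ 0}, is nonempty if and only if R_G·cos φ ≥ r_E, i.e., if and only if |φ| ≤ φ_inv := arccos(r_E / (r_E + a_G)). In particular, a terminal at latitude |φ| > φ_inv sees no GEO satellite. -/
open Real
open scoped RealInnerProductSpace

/-! A point `x` is visible from `t` iff `⟪x, t⟫ ≥ ‖t‖² = r_E²`. On the equatorial circle of radius
`R_G` the linear form `⟪·, t⟫` is `x₀ · r_E cos φ`, with maximum `R_G r_E cos φ` at `(R_G, 0, 0)`;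
so some point is visible iff `r_E ≤ R_G cos φ`, which for `|φ| < π / 2` is `|φ| ≤ arccos (r_E / R_G)`. -/

theorem inner_sub_self_nonneg_iff {E : Type*} [NormedAddCommGroup E] [InnerProductSpace ℝ E]
    (x t : E) : 0 ≤ ⟪x - t, t⟫ ↔ ‖t‖ ^ 2 ≤ ⟪x, t⟫ := by
  rw [inner_sub_left, real_inner_self_eq_norm_sq, sub_nonneg]

theorem Real.le_arccos_iff_le_cos {θ c : ℝ} (hθ : θ ∈ Set.Icc 0 π) (hc : c ∈ Set.Icc (-1) 1) :
    θ ≤ arccos c ↔ c ≤ cos θ := by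
  conv_rhs => rw [← cos_arccos hc.1 hc.2]
  exact (strictAntiOn_cos.le_iff_ge ⟨arccos_nonneg c, arccos_le_pi c⟩ hθ).symm

namespace EuclideanSpace

theorem inner_eq_mul_of_apply_eq_zero {x t : EuclideanSpace ℝ (Fin 3)} (hx : x 2 = 0)
    (ht : t 1 = 0) : ⟪x, t⟫ = x 0 * t 0 := by
  simp [inner_eq_star_dotProduct, dotProduct, Fin.sum_univ_three, hx, ht, mul_comm]

theorem exists_mem_circle_le_inner_iff {t : EuclideanSpace ℝ (Fin 3)} {R c : ℝ} (hR : 0 ≤ R)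
    (ht₁ : t 1 = 0) (ht₀ : 0 ≤ t 0) :
    (∃ x : EuclideanSpace ℝ (Fin 3), (‖x‖ = R ∧ x 2 = 0) ∧ c ≤ ⟪x, t⟫) ↔ c ≤ R * t 0 := by
  constructor
  · rintro ⟨x, ⟨hxR, hx₂⟩, hc⟩
    calc c ≤ x 0 * t 0 := by rwa [← inner_eq_mul_of_apply_eq_zero hx₂ ht₁]
      _ ≤ ‖x‖ * t 0 := by
        gcongr
        exact (le_abs_self _).trans (PiLp.norm_apply_le x 0)
      _ = R * t 0 := by rw [hxR]
  · intro hc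
    refine ⟨single 0 R, ⟨by simp [abs_of_nonneg hR], by simp⟩, ?_⟩
    rwa [inner_eq_mul_of_apply_eq_zero (by simp) ht₁, PiLp.single_apply, if_pos rfl]

end EuclideanSpace

/-- The set of points of the geostationary orbit visible from the terminal at latitude `φ`
is nonempty iff `R_G·cos φ ≥ r_E`, equivalently iff `|φ| ≤ arccos(r_E/(r_E + a_G))`. -/
theorem geo_visible_nonempty_iff
    (r_E a_G φ : ℝ) (hr : 0 < r_E) (ha : 0 < a_G)
    (hφ : φ ∈ Set.Ioo (-(π / 2)) (π / 2))
    (R_G : ℝ) (hR : R_G = r_E + a_G)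
    (C_G : Set (EuclideanSpace ℝ (Fin 3)))
    (hC : C_G = {x : EuclideanSpace ℝ (Fin 3) | ‖x‖ = R_G ∧ x 2 = 0})
    (t : EuclideanSpace ℝ (Fin 3))
    (ht : t = ![r_E * Real.cos φ, 0, r_E * Real.sin φ]) :
    ({x ∈ C_G | ⟪x - t, t⟫ ≥ 0}.Nonempty ↔ R_G * Real.cos φ ≥ r_E) ∧
      ({x ∈ C_G | ⟪x - t, t⟫ ≥ 0}.Nonempty ↔
        |φ| ≤ Real.arccos (r_E / (r_E + a_G))) := by
  have hcos : 0 < cos φ := cos_pos_of_mem_Ioo hφ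
  have hRpos : 0 < R_G := by linarith
  have ht₀ : t 0 = r_E * cos φ := congrFun ht 0
  have ht₁ : t 1 = 0 := congrFun ht 1
  have ht₂ : t 2 = r_E * sin φ := congrFun ht 2
  have hnorm : ‖t‖ ^ 2 = r_E ^ 2 := by
    rw [EuclideanSpace.norm_sq_eq, Fin.sum_univ_three, ht₀, ht₁, ht₂]
    simp only [Real.norm_eq_abs, sq_abs]
    linear_combination r_E ^ 2 * sin_sq_add_cos_sq φ
  have hvisible : {x ∈ C_G | ⟪x - t, t⟫ ≥ 0}.Nonempty ↔ R_G * cos φ ≥ r_E := by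
    simp only [Set.Nonempty, hC, Set.mem_ofPred_eq, ge_iff_le, inner_sub_self_nonneg_iff, hnorm]
    rw [EuclideanSpace.exists_mem_circle_le_inner_iff hRpos.le ht₁ (ht₀ ▸ mul_nonneg hr.le hcos.le), ht₀,
      sq, mul_left_comm, mul_le_mul_iff_right₀ hr]
  have hφabs : |φ| ∈ Set.Icc 0 π :=
    ⟨abs_nonneg φ, by linarith [abs_lt.mpr ⟨hφ.1, hφ.2⟩, pi_pos]⟩
  have hratio : r_E / (r_E + a_G) ∈ Set.Icc (-1) 1 :=
    ⟨by linarith [div_pos hr (hR ▸ hRpos)], (div_le_one (hR ▸ hRpos)).2 (by linarith)⟩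
  refine ⟨hvisible, hvisible.trans ?_⟩
  rw [le_arccos_iff_le_cos hφabs hratio, cos_abs, div_le_iff₀ (by linarith), ← hR, mul_comm]
end

section
/- Assume R_G·cos φ ≥ r_E. Then the one-dimensional Hausdorff measure of the visible arc of the geostationary orbit equals μH¹({x ∈ C_G : ⟪x − t, t⟫ ≥ 0}) = 2·R_G·arccos(r_E / (R_G·cos φ)). (This is the arc length 2(r_E + a_G)·arccos(r_E/((r_E + a_G)cos φ)) appearing in the GEO-visible probability of Lemma 1.) -/
/-!
Identify the equatorial plane `x₃ = 0` with `ℂ`. There the visibility condition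
`⟪x - t, t⟫ ≥ 0` reads `Re x ≥ r_E / cos φ = R_G cos α` with `α = arccos (r_E / (R_G cos φ))`,
so the visible arc is `circleMap 0 R_G '' [-α, α]`, and it remains to show that an arc of a
circle of radius `R` over an angle `h < 2π` has `μH[1]`-measure `R h`. The bound `≤` holds because
`circleMap` is `R`-Lipschitz. For `≥`, the arc is the almost disjoint union of `n` congruent
arcs of angle `h / n`; each of them has measure at least its chord length `2 R sin (h / 2n)`
(project it onto the line of the chord), and `n sin (h / 2n) → h / 2`.
-/

open Real MeasureTheory
open scoped RealInnerProductSpace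

section CircleArc

open Set Filter Topology

theorem hausdorffMeasure_circleMap_image_Icc_eq_sub (d : ℝ) (c : ℂ) (R a b : ℝ) :
    μH[d] (circleMap c R '' Icc a b) = μH[d] (circleMap 0 R '' Icc 0 (b - a)) := by
  let e : ℂ ≃ᵢ ℂ := (rotation (Circle.exp a)).toIsometryEquiv.trans (IsometryEquiv.addLeft c)
  have he (θ : ℝ) : circleMap c R θ = e (circleMap 0 R (θ - a)) := by
    simp only [e, IsometryEquiv.trans_apply, LinearIsometryEquiv.coe_toIsometryEquiv,
      rotation_apply, Circle.coe_exp, IsometryEquiv.addLeft_apply, circleMap, zero_add]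
    rw [mul_left_comm, ← Complex.exp_add]
    push_cast
    ring_nf
  have himage : circleMap c R '' Icc a b = e '' (circleMap 0 R '' Icc 0 (b - a)) := by
    rw [← sub_self a, ← image_sub_const_Icc, image_image, image_image]
    simp only [← he]
  rw [himage, IsometryEquiv.hausdorffMeasure_image]

theorem injOn_circleMap_Icc (c : ℂ) {R a b : ℝ} (hR : R ≠ 0) (hab : b - a < 2 * π) :
    InjOn (circleMap c R) (Icc a b) := fun _ hx _ hy h =>
  eq_of_circleMap_eq hR (abs_sub_lt_iff.2 ⟨by linarith [hx.2, hy.1], by linarith [hx.1, hy.2]⟩) h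

theorem hausdorffMeasure_circleMap_image_Icc_le (c : ℂ) (R a b : ℝ) :
    μH[1] (circleMap c R '' Icc a b) ≤ ENNReal.ofReal (|R| * (b - a)) :=
  calc μH[1] (circleMap c R '' Icc a b)
      ≤ (nnabs R : ENNReal) ^ (1 : ℝ) * μH[1] (Icc a b) :=
        (lipschitzWith_circleMap c R).hausdorffMeasure_image_le zero_le_one _
    _ = ENNReal.ofReal (|R| * (b - a)) := by
        rw [ENNReal.rpow_one, hausdorffMeasure_real, Real.volume_Icc,
          ENNReal.ofReal_mul (abs_nonneg R), ← Real.toNNReal_abs]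
        rfl

theorem hausdorffMeasure_circleMap_image_Icc_add {d : ℝ} (hd : 0 < d) {R s t : ℝ} (hR : R ≠ 0)
    (hs : 0 ≤ s) (ht : 0 ≤ t) (hst : s + t < 2 * π) :
    μH[d] (circleMap 0 R '' Icc 0 (s + t)) =
      μH[d] (circleMap 0 R '' Icc 0 s) + μH[d] (circleMap 0 R '' Icc 0 t) := by
  have := Measure.nullSingletonClass_hausdorff (X := ℂ) hd
  have hinj := injOn_circleMap_Icc 0 hR (a := 0) (b := s + t) (by linarith)
  have hsplit : circleMap 0 R '' Icc 0 (s + t) =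
      circleMap 0 R '' Icc 0 s ∪ circleMap 0 R '' Icc s (s + t) := by
    rw [← image_union, Icc_union_Icc_eq_Icc hs (by linarith)]
  have hinter : circleMap 0 R '' Icc 0 s ∩ circleMap 0 R '' Icc s (s + t) =
      {circleMap 0 R s} := by
    rw [← hinj.image_inter (Icc_subset_Icc le_rfl (by linarith)) (Icc_subset_Icc hs le_rfl),
      Icc_inter_Icc_eq_singleton hs (by linarith), image_singleton]
  have hclosed : IsClosed (circleMap 0 R '' Icc s (s + t)) :=
    (isCompact_Icc.image (continuous_circleMap 0 R)).isClosed
  rw [hsplit, measure_union₀ hclosed.measurableSet.nullMeasurableSet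
      (by rw [AEDisjoint, hinter, measure_singleton]),
    hausdorffMeasure_circleMap_image_Icc_eq_sub d 0 R s, add_sub_cancel_left]

theorem hausdorffMeasure_circleMap_image_Icc_nat_mul {d : ℝ} (hd : 0 < d) {R h : ℝ} (hR : R ≠ 0)
    (hh : 0 ≤ h) (n : ℕ) (hn : n * h < 2 * π) :
    μH[d] (circleMap 0 R '' Icc 0 (n * h)) = n * μH[d] (circleMap 0 R '' Icc 0 h) := by
  have := Measure.nullSingletonClass_hausdorff (X := ℂ) hd
  induction n with
  | zero => simp
  | succ n ih =>
    push_cast at hn ⊢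
    rw [add_one_mul, hausdorffMeasure_circleMap_image_Icc_add hd hR (by positivity) hh
      (by linarith), ih (by nlinarith), add_one_mul]

theorem ofReal_two_mul_sin_le_hausdorffMeasure_circleMap_image_Icc (R : ℝ) {h : ℝ}
    (hh : 0 ≤ h) :
    ENNReal.ofReal (2 * |R| * sin (h / 2)) ≤ μH[1] (circleMap 0 R '' Icc 0 h) := by
  have hchord : uIcc (R * sin (-(h / 2))) (R * sin (h / 2)) ⊆
      Complex.im '' (circleMap 0 R '' Icc (-(h / 2)) (h / 2)) := by
    rw [image_image, ← uIcc_of_le (by linarith)]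
    simp only [circleMap_zero_im]
    exact intermediate_value_uIcc (by fun_prop : Continuous fun θ => R * sin θ).continuousOn
  calc ENNReal.ofReal (2 * |R| * sin (h / 2))
      ≤ ENNReal.ofReal |R * sin (h / 2) - R * sin (-(h / 2))| := by
        gcongr
        rw [sin_neg, mul_neg, sub_neg_eq_add, ← two_mul, abs_mul, abs_mul, abs_two, mul_assoc]
        gcongr
        exact le_abs_self _
    _ = μH[1] (uIcc (R * sin (-(h / 2))) (R * sin (h / 2))) := by
        rw [hausdorffMeasure_real, Real.volume_interval]
    _ ≤ μH[1] (Complex.im '' (circleMap 0 R '' Icc (-(h / 2)) (h / 2))) := measure_mono hchord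
    _ ≤ μH[1] (circleMap 0 R '' Icc (-(h / 2)) (h / 2)) := by
        simpa using (RCLike.lipschitzWith_im (K := ℂ)).hausdorffMeasure_image_le zero_le_one
          (circleMap 0 R '' Icc (-(h / 2)) (h / 2))
    _ = μH[1] (circleMap 0 R '' Icc 0 h) := by
        rw [hausdorffMeasure_circleMap_image_Icc_eq_sub, sub_neg_eq_add, add_halves]

theorem tendsto_nat_mul_sin_div_nat (x : ℝ) :
    Tendsto (fun n : ℕ => n * sin (x / n)) atTop (𝓝 x) := by
  have hsinc : Tendsto (fun n : ℕ => x * sinc (x / n)) atTop (𝓝 x) := by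
    simpa [sinc_zero] using ((continuous_sinc.tendsto 0).comp
      (tendsto_const_div_atTop_nhds_zero_nat x)).const_mul x
  refine hsinc.congr' (eventually_atTop.2 ⟨1, fun n hn => ?_⟩)
  have hn : (n : ℝ) ≠ 0 := by positivity
  rcases eq_or_ne x 0 with rfl | hx
  · simp
  rw [sinc_of_ne_zero (div_ne_zero hx hn)]
  field_simp

theorem hausdorffMeasure_circleMap_image_Icc (c : ℂ) (R : ℝ) {a b : ℝ} (hab : b - a < 2 * π) :
    μH[1] (circleMap c R '' Icc a b) = ENNReal.ofReal (|R| * (b - a)) := by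
  refine le_antisymm (hausdorffMeasure_circleMap_image_Icc_le c R a b) ?_
  rcases eq_or_ne R 0 with rfl | hR
  · simp
  rcases lt_or_ge (b - a) 0 with hba | hba
  · rw [ENNReal.ofReal_of_nonpos (mul_nonpos_of_nonneg_of_nonpos (abs_nonneg R) hba.le)]
    positivity
  rw [hausdorffMeasure_circleMap_image_Icc_eq_sub]
  set h := b - a
  have hpieces (n : ℕ) (hn : 1 ≤ n) :
      ENNReal.ofReal (2 * |R| * (n * sin (h / 2 / n))) ≤ μH[1] (circleMap 0 R '' Icc 0 h) := by
    have hn0 : (0 : ℝ) < n := by exact_mod_cast hn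
    calc ENNReal.ofReal (2 * |R| * (n * sin (h / 2 / n)))
        = n * ENNReal.ofReal (2 * |R| * sin (h / n / 2)) := by
          rw [← ENNReal.ofReal_natCast, ← ENNReal.ofReal_mul hn0.le, div_right_comm]
          congr 1
          ring
      _ ≤ n * μH[1] (circleMap 0 R '' Icc 0 (h / n)) := by
          gcongr
          exact ofReal_two_mul_sin_le_hausdorffMeasure_circleMap_image_Icc R (by positivity)
      _ = μH[1] (circleMap 0 R '' Icc 0 h) := by
          rw [← hausdorffMeasure_circleMap_image_Icc_nat_mul one_pos hR (by positivity) n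
            (by rwa [mul_div_cancel₀ _ hn0.ne']), mul_div_cancel₀ _ hn0.ne']
  refine le_of_tendsto ?_ (eventually_atTop.2 ⟨1, hpieces⟩)
  convert ENNReal.tendsto_ofReal ((tendsto_nat_mul_sin_div_nat (h / 2)).const_mul (2 * |R|))
    using 2
  congr 1
  ring

theorem setOf_norm_eq_and_mul_cos_le_re_eq_image_circleMap {R α : ℝ} (hR : 0 < R)
    (hα₀ : 0 ≤ α) (hαπ : α ≤ π) :
    {z : ℂ | ‖z‖ = R ∧ R * cos α ≤ z.re} = circleMap 0 R '' Icc (-α) α := by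
  ext z
  constructor
  · rintro ⟨hz, hre⟩
    refine ⟨Complex.arg z, ?_, ?_⟩
    · have hcos : cos α ≤ cos |Complex.arg z| := by
        rw [cos_abs]
        rw [← Complex.norm_mul_cos_arg, hz] at hre
        exact le_of_mul_le_mul_left hre hR
      exact abs_le.1 ((strictAntiOn_cos.le_iff_ge ⟨hα₀, hαπ⟩
        ⟨abs_nonneg _, Complex.abs_arg_le_pi z⟩).1 hcos)
    · rw [circleMap_zero, ← hz, Complex.norm_mul_exp_arg_mul_I]
  · rintro ⟨θ, hθ, rfl⟩
    refine ⟨by simp [abs_of_pos hR], ?_⟩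
    rw [circleMap_zero_re, ← cos_abs θ]
    have hθα : |θ| ≤ α := abs_le.2 hθ
    gcongr
    exact strictAntiOn_cos.antitoneOn ⟨abs_nonneg _, hθα.trans hαπ⟩ ⟨hα₀, hαπ⟩ hθα

end CircleArc

section XYPlane

open Set

def complexToXYPlane (z : ℂ) : EuclideanSpace ℝ (Fin 3) := !₂[z.re, z.im, 0]

theorem complexToXYPlane_apply_two (z : ℂ) : complexToXYPlane z 2 = 0 := rfl

theorem isometry_complexToXYPlane : Isometry complexToXYPlane := by
  refine Isometry.of_dist_eq fun z w => ?_
  simp [EuclideanSpace.dist_eq, Fin.sum_univ_three, Complex.dist_eq_re_im, complexToXYPlane,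
    Real.dist_eq, sq_abs]

theorem norm_complexToXYPlane (z : ℂ) : ‖complexToXYPlane z‖ = ‖z‖ := by
  have h0 : complexToXYPlane 0 = 0 := by
    ext i
    fin_cases i <;> rfl
  rw [← dist_zero_right, ← dist_zero_right z, ← h0, isometry_complexToXYPlane.dist_eq]

theorem range_complexToXYPlane :
    range complexToXYPlane = {x : EuclideanSpace ℝ (Fin 3) | x 2 = 0} := by
  ext x
  refine ⟨?_, fun (hx : x 2 = 0) => ⟨⟨x 0, x 1⟩, ?_⟩⟩
  · rintro ⟨z, rfl⟩
    exact complexToXYPlane_apply_two z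
  · ext i
    fin_cases i <;> simp [complexToXYPlane, hx.symm]

theorem inner_complexToXYPlane_sub (z : ℂ) {r φ : ℝ} {t : EuclideanSpace ℝ (Fin 3)}
    (ht : ⇑t = ![r * cos φ, 0, r * sin φ]) :
    ⟪complexToXYPlane z - t, t⟫ = r * cos φ * z.re - r ^ 2 := by
  simp only [PiLp.inner_apply, Fin.sum_univ_three, PiLp.sub_apply, ht, complexToXYPlane,
    Matrix.cons_val_zero, Matrix.cons_val_one, Matrix.cons_val, RCLike.inner_apply, conj_trivial]
  linear_combination (-r ^ 2) * sin_sq_add_cos_sq φ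

theorem sep_inner_sub_nonneg_eq_image_complexToXYPlane {r φ R : ℝ} (hr : 0 < r)
    (hφ : 0 < cos φ) {t : EuclideanSpace ℝ (Fin 3)} (ht : ⇑t = ![r * cos φ, 0, r * sin φ]) :
    {x ∈ {x : EuclideanSpace ℝ (Fin 3) | ‖x‖ = R ∧ x 2 = 0} | ⟪x - t, t⟫ ≥ 0} =
      complexToXYPlane '' {z : ℂ | ‖z‖ = R ∧ r / cos φ ≤ z.re} := by
  have hsub : {x ∈ {x : EuclideanSpace ℝ (Fin 3) | ‖x‖ = R ∧ x 2 = 0} | ⟪x - t, t⟫ ≥ 0} ⊆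
      range complexToXYPlane := by
    rw [range_complexToXYPlane]
    exact fun x hx => hx.1.2
  rw [← image_preimage_eq_of_subset hsub]
  congr 1
  ext z
  have hvisible : 0 ≤ r * cos φ * z.re - r ^ 2 ↔ r / cos φ ≤ z.re := by
    rw [div_le_iff₀ hφ, sub_nonneg, sq, mul_assoc, mul_le_mul_iff_right₀ hr, mul_comm]
  simp only [mem_preimage, mem_ofPred_eq, norm_complexToXYPlane, complexToXYPlane_apply_two,
    inner_complexToXYPlane_sub z ht, ge_iff_le, hvisible, and_true]

end XYPlane

theorem hausdorff_measure_geo_visible_arc_general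
    (r_E φ : ℝ) (hr : 0 < r_E)
    (hφ : φ ∈ Set.Ioo (-(π / 2)) (π / 2))
    (R_G : ℝ)
    (hvis : R_G * Real.cos φ ≥ r_E)
    (C_G : Set (EuclideanSpace ℝ (Fin 3)))
    (hC : C_G = {x : EuclideanSpace ℝ (Fin 3) | ‖x‖ = R_G ∧ x 2 = 0})
    (t : EuclideanSpace ℝ (Fin 3))
    (ht : t = ![r_E * Real.cos φ, 0, r_E * Real.sin φ]) :
    μH[1] {x ∈ C_G | ⟪x - t, t⟫ ≥ 0} =
      ENNReal.ofReal (2 * R_G * Real.arccos (r_E / (R_G * Real.cos φ))) := by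
  have hcos : 0 < cos φ := cos_pos_of_mem_Ioo hφ
  have hR : 0 < R_G := pos_of_mul_pos_left (hr.trans_le hvis) hcos.le
  set α := arccos (r_E / (R_G * cos φ))
  have hratio : 0 < r_E / (R_G * cos φ) := by positivity
  have hcosα : R_G * cos α = r_E / cos φ := by
    rw [cos_arccos (by linarith) ((div_le_one (by positivity)).2 hvis)]
    field_simp
  have hα : α < π := arccos_lt_pi.2 (by linarith)
  rw [hC, sep_inner_sub_nonneg_eq_image_complexToXYPlane hr hcos ht, ← hcosα,
    setOf_norm_eq_and_mul_cos_le_re_eq_image_circleMap hR (arccos_nonneg _) (arccos_le_pi _),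
    isometry_complexToXYPlane.hausdorffMeasure_image (Or.inl zero_le_one),
    hausdorffMeasure_circleMap_image_Icc 0 R_G (by linarith), abs_of_pos hR]
  congr 1
  ring

/-- When `R_G·cos φ ≥ r_E`, the one-dimensional Hausdorff measure (arc length) of the
visible arc of the geostationary orbit equals `2·R_G·arccos(r_E/(R_G·cos φ))`. -/
theorem hausdorff_measure_geo_visible_arc
    (r_E a_G φ : ℝ) (hr : 0 < r_E) (ha : 0 < a_G)
    (hφ : φ ∈ Set.Ioo (-(π / 2)) (π / 2))
    (R_G : ℝ) (hR : R_G = r_E + a_G)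
    (hvis : R_G * Real.cos φ ≥ r_E)
    (C_G : Set (EuclideanSpace ℝ (Fin 3)))
    (hC : C_G = {x : EuclideanSpace ℝ (Fin 3) | ‖x‖ = R_G ∧ x 2 = 0})
    (t : EuclideanSpace ℝ (Fin 3))
    (ht : t = ![r_E * Real.cos φ, 0, r_E * Real.sin φ]) :
    μH[1] {x ∈ C_G | ⟪x - t, t⟫ ≥ 0} =
      ENNReal.ofReal (2 * R_G * Real.arccos (r_E / (R_G * Real.cos φ))) :=
  hausdorff_measure_geo_visible_arc_general r_E φ hr hφ R_G hvis C_G hC t ht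
end

section
/- Assume R_G·cos φ ≥ r_E. Then the maximum distance from the terminal t to a visible point of the geostationary orbit equals r_vis,max^G = √(a_G² + 2·a_G·r_E): every visible x ∈ C_G satisfies ‖x − t‖ ≤ √(a_G² + 2·a_G·r_E), and this value is attained by some visible point of C_G. -/
/-!
Expanding `‖x‖² = ‖(x - t) + t‖²` gives `‖x - t‖² = ‖x‖² - ‖t‖² - 2⟪x - t, t⟫`, so on the
visible side of the tangent plane at `t` the distance is at most `√(R_G² - r_E²)`, with equality
exactly on that plane. The plane `⟪x, t⟫ = r_E²` meets the equatorial plane in the line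
`x₁ = r_E / cos φ`, which meets the orbit precisely when `r_E / cos φ ≤ R_G`.
-/

open Real
open scoped RealInnerProductSpace

section InnerProductSpace

variable {E : Type*} [NormedAddCommGroup E] [InnerProductSpace ℝ E]

theorem norm_sq_eq_norm_sub_sq_add_two_inner_sub_add (x t : E) :
    ‖x‖ ^ 2 = ‖x - t‖ ^ 2 + 2 * ⟪x - t, t⟫ + ‖t‖ ^ 2 := by
  simpa using norm_add_sq_real (x - t) t

theorem norm_sub_sq_le_of_inner_sub_nonneg {x t : E} (h : 0 ≤ ⟪x - t, t⟫) :
    ‖x - t‖ ^ 2 ≤ ‖x‖ ^ 2 - ‖t‖ ^ 2 := by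
  linarith [norm_sq_eq_norm_sub_sq_add_two_inner_sub_add x t]

theorem norm_sub_sq_of_inner_sub_eq_zero {x t : E} (h : ⟪x - t, t⟫ = 0) :
    ‖x - t‖ ^ 2 = ‖x‖ ^ 2 - ‖t‖ ^ 2 := by
  linarith [norm_sq_eq_norm_sub_sq_add_two_inner_sub_add x t]

end InnerProductSpace

section Euclidean3

theorem EuclideanSpace.inner_fin_three (x y : EuclideanSpace ℝ (Fin 3)) :
    ⟪x, y⟫ = x 0 * y 0 + x 1 * y 1 + x 2 * y 2 := by
  simp only [PiLp.inner_apply, Fin.sum_univ_three, RCLike.inner_apply, conj_trivial]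
  ring

theorem norm_sq_of_ofLp_eq_spherical {t : EuclideanSpace ℝ (Fin 3)} {r φ : ℝ}
    (ht : t.ofLp = ![r * cos φ, 0, r * sin φ]) : ‖t‖ ^ 2 = r ^ 2 := by
  rw [← real_inner_self_eq_norm_sq, EuclideanSpace.inner_fin_three]
  simp only [ht, Matrix.cons_val_zero, Matrix.cons_val_one, Matrix.cons_val_two,
    Matrix.head_cons, Matrix.tail_cons]
  linear_combination r ^ 2 * cos_sq_add_sin_sq φ

theorem norm_equatorial_point {c R : ℝ} (hc : 0 ≤ c) (hcR : c ≤ R) :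
    ‖!₂[c, √(R ^ 2 - c ^ 2), 0]‖ = R := by
  have hs : √(R ^ 2 - c ^ 2) ^ 2 = R ^ 2 - c ^ 2 := sq_sqrt (by nlinarith)
  rw [← sq_eq_sq₀ (norm_nonneg _) (hc.trans hcR), ← real_inner_self_eq_norm_sq,
    EuclideanSpace.inner_fin_three]
  simp only [Matrix.cons_val_zero, Matrix.cons_val_one, Matrix.cons_val_two,
    Matrix.head_cons, Matrix.tail_cons]
  linear_combination hs

end Euclidean3

theorem geo_max_visible_distance_general
    (r_E a_G φ : ℝ) (hr : 0 < r_E)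
    (hφ : φ ∈ Set.Ioo (-(π / 2)) (π / 2))
    (R_G : ℝ) (hR : R_G = r_E + a_G)
    (hvis : R_G * Real.cos φ ≥ r_E)
    (C_G : Set (EuclideanSpace ℝ (Fin 3)))
    (hC : C_G = {x : EuclideanSpace ℝ (Fin 3) | ‖x‖ = R_G ∧ x 2 = 0})
    (t : EuclideanSpace ℝ (Fin 3))
    (ht : t = ![r_E * Real.cos φ, 0, r_E * Real.sin φ]) :
    (∀ x ∈ C_G, ⟪x - t, t⟫ ≥ 0 →
        ‖x - t‖ ≤ Real.sqrt (a_G ^ 2 + 2 * a_G * r_E)) ∧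
      (∃ x ∈ C_G, ⟪x - t, t⟫ ≥ 0 ∧
        ‖x - t‖ = Real.sqrt (a_G ^ 2 + 2 * a_G * r_E)) := by
  subst hC
  have hgap : R_G ^ 2 - ‖t‖ ^ 2 = a_G ^ 2 + 2 * a_G * r_E := by
    rw [norm_sq_of_ofLp_eq_spherical ht, hR]; ring
  refine ⟨fun x ⟨hx, _⟩ hxt ↦ ?_, ?_⟩
  · rw [← hgap, ← hx]
    exact le_sqrt_of_sq_le (norm_sub_sq_le_of_inner_sub_nonneg hxt)
  have hcos : 0 < cos φ := cos_pos_of_mem_Ioo hφ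
  set c := r_E / cos φ
  have hc : c * cos φ = r_E := div_mul_cancel₀ _ hcos.ne'
  have hcR : c ≤ R_G := (div_le_iff₀ hcos).2 hvis
  set p : EuclideanSpace ℝ (Fin 3) := !₂[c, √(R_G ^ 2 - c ^ 2), 0] with hp
  have hpR : ‖p‖ = R_G := norm_equatorial_point (by positivity) hcR
  have htangent : ⟪p - t, t⟫ = 0 := by
    rw [inner_sub_left, real_inner_self_eq_norm_sq, norm_sq_of_ofLp_eq_spherical ht,
      EuclideanSpace.inner_fin_three]
    simp only [hp, ht, Matrix.cons_val_zero, Matrix.cons_val_one, Matrix.cons_val_two,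
      Matrix.head_cons, Matrix.tail_cons]
    linear_combination r_E * hc
  have hdist : ‖p - t‖ ^ 2 = a_G ^ 2 + 2 * a_G * r_E := by
    rw [norm_sub_sq_of_inner_sub_eq_zero htangent, hpR, hgap]
  exact ⟨p, ⟨hpR, rfl⟩, htangent.ge, by rw [← hdist, sqrt_sq (norm_nonneg _)]⟩

/-- When `R_G·cos φ ≥ r_E`, the maximum distance from the terminal to a visible point of
the geostationary orbit equals `r_vis,max^G = √(a_G² + 2·a_G·r_E)`: every visible point is
at distance at most this value, and the value is attained by some visible point. -/
theorem geo_max_visible_distance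
    (r_E a_G φ : ℝ) (hr : 0 < r_E) (ha : 0 < a_G)
    (hφ : φ ∈ Set.Ioo (-(π / 2)) (π / 2))
    (R_G : ℝ) (hR : R_G = r_E + a_G)
    (hvis : R_G * Real.cos φ ≥ r_E)
    (C_G : Set (EuclideanSpace ℝ (Fin 3)))
    (hC : C_G = {x : EuclideanSpace ℝ (Fin 3) | ‖x‖ = R_G ∧ x 2 = 0})
    (t : EuclideanSpace ℝ (Fin 3))
    (ht : t = ![r_E * Real.cos φ, 0, r_E * Real.sin φ]) :
    (∀ x ∈ C_G, ⟪x - t, t⟫ ≥ 0 →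
        ‖x - t‖ ≤ Real.sqrt (a_G ^ 2 + 2 * a_G * r_E)) ∧
      (∃ x ∈ C_G, ⟪x - t, t⟫ ≥ 0 ∧
        ‖x - t‖ = Real.sqrt (a_G ^ 2 + 2 * a_G * r_E)) :=
  geo_max_visible_distance_general r_E a_G φ hr hφ R_G hR hvis C_G hC t ht
end

section
/- The function θ ↦ ‖x(θ) − t‖ is strictly increasing on [0, π], where x(θ) = (R_G cos θ, R_G sin θ, 0); hence for each distance r between the minimum ‖x(0) − t‖ and the maximum ‖x(π) − t‖ there is a unique θ(r) ∈ [0, π] with ‖x(θ(r)) − t‖ = r, and {θ ∈ [−π, π] : ‖x(θ) − t‖ ≤ r} = [−θ(r), θ(r)]. -/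
open Real Set

/-!
By the law of cosines the squared distance from the terminal to the orbit point at longitude `θ`
is `R_G² + r_E² - 2 R_G r_E cos φ cos θ`. As `cos φ > 0` and `cos` is strictly decreasing on
`[0, π]`, the distance is a continuous, even function of `θ` that is strictly increasing on
`[0, π]`; the intermediate value theorem gives `θ(r)`, and evenness turns the sublevel set into
the symmetric interval `[-θ(r), θ(r)]`.
-/

theorem StrictMonoOn.exists_unique_mem_Icc_eq {f : ℝ → ℝ} {a b y : ℝ} (hab : a ≤ b)
    (hf : StrictMonoOn f (Icc a b)) (hcont : ContinuousOn f (Icc a b))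
    (hy : y ∈ Icc (f a) (f b)) :
    ∃ c ∈ Icc a b, f c = y ∧ ∀ c' ∈ Icc a b, f c' = y → c' = c := by
  obtain ⟨c, hc, rfl⟩ := intermediate_value_Icc hab hcont hy
  exact ⟨c, hc, rfl, fun c' hc' h => hf.injOn hc' hc h⟩

theorem Function.Even.sublevel_Icc_eq_Icc {β : Type*} [Preorder β] {f : ℝ → β} {a c : ℝ} (heven : Function.Even f)
    (hf : StrictMonoOn f (Icc 0 a)) (hc : c ∈ Icc 0 a) :
    {θ ∈ Icc (-a) a | f θ ≤ f c} = Icc (-c) c := by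
  have f_abs (θ : ℝ) : f |θ| = f θ := by
    rcases abs_choice θ with h | h <;> simp [h, heven θ]
  ext θ
  simp only [mem_Icc, ← abs_le, mem_ofPred_eq]
  rw [← f_abs θ]
  constructor
  · rintro ⟨hθa, hθc⟩
    exact (hf.le_iff_le ⟨abs_nonneg θ, hθa⟩ hc).1 hθc
  · intro hθc
    have hθa : |θ| ≤ a := hθc.trans hc.2
    exact ⟨hθa, (hf.le_iff_le ⟨abs_nonneg θ, hθa⟩ hc).2 hθc⟩

theorem Real.strictMonoOn_sqrt_sub_mul_cos {A B : ℝ} (hB : 0 < B) (hBA : B ≤ A) :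
    StrictMonoOn (fun θ => √(A - B * cos θ)) (Icc 0 π) := by
  intro θ₁ _ θ₂ _ hθ
  have hcos : cos θ₂ < cos θ₁ := strictAntiOn_cos ‹_› ‹_› hθ
  exact Real.sqrt_lt_sqrt (by nlinarith [cos_le_one θ₁]) (by nlinarith)

theorem Real.even_sqrt_sub_mul_cos (A B : ℝ) : Function.Even fun θ => √(A - B * cos θ) :=
  fun θ => by simp only [cos_neg]

theorem norm_sub_eq_sqrt_sub_mul_cos {u v : EuclideanSpace ℝ (Fin 3)} {R r φ θ : ℝ}
    (hu : u.ofLp = ![R * cos θ, R * sin θ, 0]) (hv : v.ofLp = ![r * cos φ, 0, r * sin φ]) :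
    ‖u - v‖ = √(R ^ 2 + r ^ 2 - 2 * R * r * cos φ * cos θ) := by
  rw [EuclideanSpace.norm_eq]
  congr 1
  simp only [WithLp.ofLp_sub, Pi.sub_apply, hu, hv, Fin.sum_univ_three, Real.norm_eq_abs, sq_abs,
    Matrix.cons_val_zero, Matrix.cons_val_one, Matrix.cons_val_two, Matrix.head_cons,
    Matrix.tail_cons]
  linear_combination R ^ 2 * sin_sq_add_cos_sq θ + r ^ 2 * sin_sq_add_cos_sq φ

/-- The distance `θ ↦ ‖x(θ) − t‖` from the terminal to the geostationary-orbit point at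
longitude `θ` is strictly increasing on `[0, π]`; hence for each `r` between the minimum
`‖x(0) − t‖` and the maximum `‖x(π) − t‖` there is a unique `θ(r) ∈ [0, π]` with
`‖x(θ(r)) − t‖ = r`, and `{θ ∈ [−π, π] : ‖x(θ) − t‖ ≤ r} = [−θ(r), θ(r)]`. -/
theorem geo_distance_strictMono_and_sublevel
    (r_E a_G φ : ℝ) (hr : 0 < r_E) (ha : 0 < a_G)
    (hφ : φ ∈ Set.Ioo (-(π / 2)) (π / 2))
    (R_G : ℝ) (hR : R_G = r_E + a_G)
    (t : EuclideanSpace ℝ (Fin 3))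
    (ht : t = ![r_E * Real.cos φ, 0, r_E * Real.sin φ])
    (x : ℝ → EuclideanSpace ℝ (Fin 3))
    (hxdef : ∀ θ : ℝ, x θ = ![R_G * Real.cos θ, R_G * Real.sin θ, 0]) :
    StrictMonoOn (fun θ : ℝ => ‖x θ - t‖) (Set.Icc 0 π) ∧
      ∀ r : ℝ, ‖x 0 - t‖ ≤ r → r ≤ ‖x π - t‖ →
        ∃ θr ∈ Set.Icc (0 : ℝ) π,
          ‖x θr - t‖ = r ∧
          (∀ θ' ∈ Set.Icc (0 : ℝ) π, ‖x θ' - t‖ = r → θ' = θr) ∧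
          {θ ∈ Set.Icc (-π) π | ‖x θ - t‖ ≤ r} = Set.Icc (-θr) θr := by
  set A := R_G ^ 2 + r_E ^ 2
  set B := 2 * R_G * r_E * cos φ
  have hdist (θ : ℝ) : ‖x θ - t‖ = √(A - B * cos θ) := by
    rw [norm_sub_eq_sqrt_sub_mul_cos (hxdef θ) ht, mul_assoc (2 * R_G * r_E)]
  have hRr : 0 < R_G * r_E := mul_pos (by linarith) hr
  have hB : 0 < B := mul_pos (by linarith) (cos_pos_of_mem_Ioo hφ)
  have hBA : B ≤ A := calc
    B ≤ 2 * (R_G * r_E) := by nlinarith [cos_le_one φ]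
    _ ≤ A := by nlinarith [sq_nonneg (R_G - r_E)]
  have hmono := Real.strictMonoOn_sqrt_sub_mul_cos hB hBA
  have hcont : Continuous fun θ => √(A - B * cos θ) := by fun_prop
  simp only [hdist]
  refine ⟨hmono, fun r h0 hπ => ?_⟩
  obtain ⟨θr, hθr, rfl, huniq⟩ :=
    hmono.exists_unique_mem_Icc_eq pi_pos.le hcont.continuousOn ⟨h0, hπ⟩
  exact ⟨θr, hθr, rfl, huniq, (Real.even_sqrt_sub_mul_cos A B).sublevel_Icc_eq_Icc hmono hθr⟩
end

section
/- (Change of variables for the GEO interference integral in Lemma 4.) Let v₁ = 4·R_G²·r_E²·cos² φ, v₂ = R_G² + r_E², assume R_G·cos φ > r_E, and let r_vis,max^G = √(a_G² + 2·a_G·r_E). Then for every r₀ with r_min^G(φ) = √((R_G − r_E cos φ)² + r_E² sin² φ) ≤ r₀ ≤ r_vis,max^G and every continuous function f : ℝ → ℝ, the integral of f(‖x − t‖) with respect to the 1-dimensional Hausdorff measure over the set {x ∈ C_G : ⟪x − t, t⟫ ≥ 0 and ‖x − t‖ ≥ r₀} equals ∫_{r₀}^{r_vis,max^G} f(r) ·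 4·r·R_G / √(v₁ − (v₂ − r²)²) dr. -/
/-!
The visible far part of the orbit is the image of a symmetric pair of angle intervals
`θ₀ ≤ |θ| ≤ θ₁` under the parametrization `θ ↦ (R_G cos θ, R_G sin θ, 0)`. On short arcs this
parametrization is bi-Lipschitz with both constants close to `R_G`, so `μH¹` on the orbit is `R_G`
times the image of Lebesgue measure in `θ`. By the law of cosines the distance to the terminal is
`r = √(v₂ - 2K cos θ)` with `K = R_G r_E cos φ`, an even function of `θ` increasing on `[0, π]`;
substituting `r` for `θ` gives `dθ = 2 r dr / √(4K² - (v₂ - r²)²)`, and `v₁ = 4K²`.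
-/

open Real MeasureTheory Set
open scoped RealInnerProductSpace ENNReal NNReal

lemma measure_Ico_le_of_forall_Ico_le {μ ν : Measure ℝ} {a b δ : ℝ} (hδ : 0 < δ)
    (h : ∀ u v, a ≤ u → u ≤ v → v ≤ b → v - u ≤ δ → μ (Ico u v) ≤ ν (Ico u v)) :
    μ (Ico a b) ≤ ν (Ico a b) := by
  suffices key : ∀ n : ℕ, ∀ u, a ≤ u → b - u ≤ n * δ → μ (Ico u b) ≤ ν (Ico u b) by
    obtain ⟨n, hn⟩ := Archimedean.arch (b - a) hδ
    exact key n a le_rfl (by simpa using hn)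
  intro n
  induction n with
  | zero =>
    intro u _ hu
    simp [Ico_eq_empty (by simp at hu; linarith : ¬u < b)]
  | succ n ih =>
    intro u hau hu
    rcases le_total b u with hbu | hub
    · simp [Ico_eq_empty_of_le hbu]
    rcases le_or_gt (b - u) δ with hshort | hlong
    · exact h u b hau hub le_rfl hshort
    rw [← Ico_union_Ico_eq_Ico (b := u + δ) (by linarith) (by linarith),
      measure_union Ico_disjoint_Ico_same measurableSet_Ico,
      measure_union Ico_disjoint_Ico_same measurableSet_Ico]
    push_cast at hu
    exact add_le_add (h u (u + δ) hau (by linarith) (by linarith) (by linarith))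
      (ih (u + δ) (by linarith) (by linarith))

section Curve

variable {E : Type*} [MetricSpace E] [MeasurableSpace E] [BorelSpace E]

lemma hausdorffMeasure_image_le_of_lipschitzOnWith {γ : ℝ → E} {K : ℝ≥0} {s : Set ℝ}
    (h : LipschitzOnWith K γ s) : μH[1] (γ '' s) ≤ K * volume s := by
  simpa [hausdorffMeasure_real] using h.hausdorffMeasure_image_le zero_le_one

lemma le_hausdorffMeasure_image_of_mul_dist_le {γ : ℝ → E} {k : ℝ≥0} {s : Set ℝ}
    (h : ∀ θ ∈ s, ∀ θ' ∈ s, k * dist θ θ' ≤ dist (γ θ) (γ θ')) :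
    k * volume s ≤ μH[1] (γ '' s) := by
  rcases eq_zero_or_pos k with rfl | hk
  · simp
  have hanti : AntilipschitzWith k⁻¹ (γ ∘ Subtype.val : s → E) :=
    AntilipschitzWith.of_le_mul_dist fun x y => by
      rw [NNReal.coe_inv, inv_mul_eq_div, le_div_iff₀' (by exact_mod_cast hk)]
      exact h x x.2 y y.2
  have hs := (isometry_subtype_coe (s := s)).hausdorffMeasure_image (Or.inl zero_le_one) univ
  have hle := hanti.le_hausdorffMeasure_image zero_le_one univ
  rw [← hs, image_univ, image_univ, range_comp, Subtype.range_coe, hausdorffMeasure_real,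
    ENNReal.rpow_one, ENNReal.coe_inv hk.ne'] at hle
  rwa [← ENNReal.mul_le_iff_le_inv (by exact_mod_cast hk.ne') ENNReal.coe_ne_top] at hle

theorem hausdorffMeasure_restrict_image_Icc {γ : ℝ → E} {ρ : E → ℝ} {R : ℝ≥0} {a b : ℝ}
    (hγ : Continuous γ) (hρ : Measurable ρ) (hργ : LeftInvOn ρ γ (Icc a b))
    (hlip : LipschitzOnWith R γ (Icc a b))
    (hlow : ∀ k < R, ∃ δ > 0, ∀ θ ∈ Icc a b, ∀ θ' ∈ Icc a b,
      dist θ θ' ≤ δ → k * dist θ θ' ≤ dist (γ θ) (γ θ')) :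
    μH[1].restrict (γ '' Icc a b) = ((R : ℝ≥0∞) • volume.restrict (Icc a b)).map γ := by
  -- The image `ν` of `μH¹` in the parameter is at most `R • volume` by the Lipschitz bound, and
  -- has the full mass `R (b - a)` since on short pieces `γ` is `k`-antilipschitz for all `k < R`.
  set ν := (μH[1].restrict (γ '' Icc a b)).map ρ
  have hν : ∀ S, MeasurableSet S → ν S = μH[1] (γ '' (S ∩ Icc a b)) := fun S hS => by
    rw [Measure.map_apply hρ hS, Measure.restrict_apply (hρ hS), hργ.image_inter']
  have hle : ν ≤ (R : ℝ≥0∞) • volume.restrict (Icc a b) := Measure.le_intro fun S hS _ => by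
    rw [hν S hS, Measure.smul_apply, Measure.restrict_apply hS, smul_eq_mul]
    exact hausdorffMeasure_image_le_of_lipschitzOnWith (hlip.mono inter_subset_right)
  have hge : ((R : ℝ≥0∞) • volume.restrict (Icc a b)) univ ≤ ν univ := by
    rw [Measure.smul_apply, Measure.restrict_apply_univ, Real.volume_Icc, smul_eq_mul]
    refine ENNReal.mul_le_of_forall_lt fun k hk c hc => ?_
    lift k to ℝ≥0 using hk.ne_top
    obtain ⟨δ, hδ, hkδ⟩ := hlow k (by exact_mod_cast hk)
    have hIco : ((k : ℝ≥0∞) • volume : Measure ℝ) (Ico a b) ≤ ν (Ico a b) :=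
      measure_Ico_le_of_forall_Ico_le hδ fun u v hau huv hvb hδuv => by
        have hsub : Ico u v ⊆ Icc a b := Ico_subset_Icc_self.trans (Icc_subset_Icc hau hvb)
        rw [hν _ measurableSet_Ico, inter_eq_left.mpr hsub, Measure.smul_apply, smul_eq_mul]
        refine le_hausdorffMeasure_image_of_mul_dist_le fun θ hθ θ' hθ' =>
          hkδ θ (hsub hθ) θ' (hsub hθ') ?_
        rw [Real.dist_eq, abs_le]
        constructor <;> linarith [hθ.1, hθ.2, hθ'.1, hθ'.2]
    calc (k : ℝ≥0∞) * c ≤ k * ENNReal.ofReal (b - a) := by gcongr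
      _ = ((k : ℝ≥0∞) • volume : Measure ℝ) (Ico a b) := by
        rw [Measure.smul_apply, Real.volume_Ico, smul_eq_mul]
      _ ≤ ν univ := hIco.trans (measure_mono (subset_univ _))
  have : IsFiniteMeasure ν := ⟨(hle univ).trans_lt <| by
    rw [Measure.smul_apply, Measure.restrict_apply_univ, Real.volume_Icc, smul_eq_mul]
    exact ENNReal.mul_lt_top ENNReal.coe_lt_top ENNReal.ofReal_lt_top⟩
  have hmap : ν.map γ = μH[1].restrict (γ '' Icc a b) := by
    have hA : MeasurableSet (γ '' Icc a b) := (isCompact_Icc.image hγ).isClosed.measurableSet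
    rw [Measure.map_map hγ.measurable hρ]
    conv_rhs => rw [← Measure.map_id (μ := μH[1].restrict (γ '' Icc a b))]
    refine Measure.map_congr ?_
    filter_upwards [ae_restrict_mem hA] with x hx
    exact hργ.rightInvOn_image hx
  rw [← hmap, Measure.eq_of_le_of_measure_univ_eq hle (le_antisymm (hle univ) hge)]

theorem setIntegral_hausdorffMeasure_image {γ : ℝ → E} {ρ : E → ℝ} {R : ℝ≥0} {a b : ℝ}
    (hγ : Continuous γ) (hρ : Measurable ρ) (hργ : LeftInvOn ρ γ (Icc a b))
    (hlip : LipschitzOnWith R γ (Icc a b))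
    (hlow : ∀ k < R, ∃ δ > 0, ∀ θ ∈ Icc a b, ∀ θ' ∈ Icc a b,
      dist θ θ' ≤ δ → k * dist θ θ' ≤ dist (γ θ) (γ θ'))
    {T : Set ℝ} (hT : MeasurableSet T) (hTab : T ⊆ Icc a b) {g : E → ℝ} (hg : Measurable g) :
    ∫ x in γ '' T, g x ∂μH[1] = R * ∫ θ in T, g (γ θ) := by
  have hγT : γ '' T = ρ ⁻¹' T ∩ γ '' Icc a b := by
    rw [← hργ.image_inter', inter_eq_left.mpr hTab]
  have hmeas : MeasurableSet (γ '' T) := by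
    rw [hγT]; exact (hρ hT).inter (isCompact_Icc.image hγ).isClosed.measurableSet
  rw [← inter_eq_left.mpr (image_mono hTab), ← Measure.restrict_restrict hmeas,
    hausdorffMeasure_restrict_image_Icc hγ hρ hργ hlip hlow,
    Measure.restrict_map hγ.measurable hmeas,
    integral_map hγ.measurable.aemeasurable hg.aestronglyMeasurable, Measure.restrict_smul,
    Measure.restrict_restrict (hγ.measurable hmeas), hργ.injOn.preimage_image_inter hTab,
    integral_smul_measure, ENNReal.coe_toReal, smul_eq_mul]

end Curve

lemma le_cos_iff_abs_le_arccos {θ c : ℝ} (hθ : |θ| ≤ π) (hc : c ≤ 1) :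
    c ≤ cos θ ↔ |θ| ≤ arccos c := by
  rcases lt_or_ge c (-1) with hc' | hc'
  · simp only [arccos_of_le_neg_one hc'.le, hθ, iff_true]
    linarith [neg_one_le_cos θ]
  have h := strictAntiOn_cos.le_iff_ge (a := arccos c) (b := |θ|) ⟨arccos_nonneg c, arccos_le_pi c⟩
    ⟨abs_nonneg θ, hθ⟩
  rwa [cos_abs, cos_arccos hc' hc] at h

lemma cos_le_iff_arccos_le_abs {θ c : ℝ} (hθ : |θ| ≤ π) (hc : -1 ≤ c) :
    cos θ ≤ c ↔ arccos c ≤ |θ| := by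
  rcases le_or_gt 1 c with hc' | hc'
  · simp only [arccos_of_one_le hc', abs_nonneg, iff_true]
    linarith [cos_le_one θ]
  have h := strictAntiOn_cos.le_iff_ge (a := |θ|) (b := arccos c) ⟨abs_nonneg θ, hθ⟩
    ⟨arccos_nonneg c, arccos_le_pi c⟩
  rwa [cos_abs, cos_arccos hc hc'.le] at h

lemma Ioc_inter_cos_preimage_Icc {c₀ c₁ : ℝ} (hc₀ : -1 < c₀) (hc₀' : c₀ ≤ 1) (hc₁ : -1 ≤ c₁) :
    Ioc (-π) π ∩ cos ⁻¹' Icc c₀ c₁ = abs ⁻¹' Icc (arccos c₁) (arccos c₀) := by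
  ext θ
  simp only [mem_inter_iff, mem_Ioc, mem_preimage, mem_Icc]
  constructor
  · rintro ⟨hθ, h₀, h₁⟩
    have hθ' : |θ| ≤ π := abs_le.mpr ⟨hθ.1.le, hθ.2⟩
    exact ⟨(cos_le_iff_arccos_le_abs hθ' hc₁).mp h₁, (le_cos_iff_abs_le_arccos hθ' hc₀').mp h₀⟩
  · rintro ⟨h₁, h₀⟩
    have hθ : |θ| < π := h₀.trans_lt (arccos_lt_pi.mpr hc₀)
    refine ⟨⟨(abs_lt.mp hθ).1, (abs_lt.mp hθ).2.le⟩, ?_, ?_⟩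
    · exact (le_cos_iff_abs_le_arccos hθ.le hc₀').mpr h₀
    · exact (cos_le_iff_arccos_le_abs hθ.le hc₁).mpr h₁

theorem setIntegral_abs_preimage_Icc_of_even {a : ℝ} (ha : 0 ≤ a) (b : ℝ) {F : ℝ → ℝ}
    (hF : ∀ θ, F (-θ) = F θ) :
    ∫ θ in abs ⁻¹' Icc a b, F θ = 2 * ∫ θ in Icc a b, F θ := by
  have hFabs : ∀ θ, F |θ| = F θ := fun θ => by
    rcases abs_choice θ with h | h <;> rw [h]
    exact hF θ
  have hIcc : (Ioi 0 ∩ Icc a b : Set ℝ) =ᵐ[volume] Icc a b := by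
    have h : (Ici 0 ∩ Icc a b : Set ℝ) = Icc a b := inter_eq_right.mpr fun θ hθ => ha.trans hθ.1
    have := (Ioi_ae_eq_Ici (μ := volume) (a := (0 : ℝ))).inter (ae_eq_refl (Icc a b))
    rwa [h] at this
  have hind : (abs ⁻¹' Icc a b).indicator (fun θ => F |θ|) =
      fun θ => (Icc a b).indicator F |θ| :=
    funext fun _ => indicator_comp_right abs
  calc ∫ θ in abs ⁻¹' Icc a b, F θ = ∫ θ in abs ⁻¹' Icc a b, F |θ| := by simp_rw [hFabs]
    _ = 2 * ∫ θ in Icc a b, F θ := by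
      rw [← integral_indicator (measurableSet_Icc.preimage continuous_abs.measurable), hind,
        integral_comp_abs (f := (Icc a b).indicator F), setIntegral_indicator measurableSet_Icc,
        setIntegral_congr_set hIcc]

theorem setIntegral_Icc_comp_sqrt_sub_mul_cos {K v a b : ℝ} (hK : 0 < K) (hv : 2 * K ≤ v)
    (ha : 0 ≤ a) (hab : a ≤ b) (hb : b < π) (g : ℝ → ℝ) :
    ∫ θ in Icc a b, g √(v - 2 * K * cos θ) =
      ∫ r in √(v - 2 * K * cos a)..√(v - 2 * K * cos b),
        g r * (2 * r / √((2 * K) ^ 2 - (v - r ^ 2) ^ 2)) := by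
  set u : ℝ → ℝ := fun θ => √(v - 2 * K * cos θ)
  have hIcc : Icc a b ⊆ Icc 0 π := Icc_subset_Icc ha hb.le
  have hnonneg : ∀ θ, 0 ≤ v - 2 * K * cos θ := fun θ => by
    nlinarith [cos_le_one θ]
  have hpos : ∀ θ ∈ Ioc a b, 0 < v - 2 * K * cos θ := fun θ hθ => by
    have h : cos θ < cos 0 :=
      cos_lt_cos_of_nonneg_of_le_pi le_rfl (by linarith [hθ.2]) (by linarith [hθ.1])
    rw [cos_zero] at h
    nlinarith
  have hmono : StrictMonoOn u (Icc a b) := fun θ hθ θ' hθ' hlt => by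
    have := strictAntiOn_cos (hIcc hθ) (hIcc hθ') hlt
    exact sqrt_lt_sqrt (hnonneg θ) (by nlinarith)
  have hderiv : ∀ θ ∈ Ioc a b, HasDerivWithinAt u (K * sin θ / u θ) (Ioc a b) θ := fun θ hθ => by
    have h := (((hasDerivAt_cos θ).const_mul (2 * K)).const_sub v).sqrt (hpos θ hθ).ne'
    refine (h.congr_deriv ?_).hasDerivWithinAt
    show _ = K * sin θ / √(v - 2 * K * cos θ)
    field_simp
  have himage : u '' Ioc a b = Ioc (u a) (u b) :=
    ContinuousOn.image_Ioc_of_strictMonoOn hab (by fun_prop) hmono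
  rw [intervalIntegral.integral_of_le
      (hmono.monotoneOn (left_mem_Icc.2 hab) (right_mem_Icc.2 hab) hab),
    ← himage, integral_image_eq_integral_abs_deriv_smul measurableSet_Ioc hderiv
      (hmono.injOn.mono Ioc_subset_Icc_self), ← setIntegral_congr_set Ioc_ae_eq_Icc]
  refine setIntegral_congr_fun measurableSet_Ioc fun θ hθ => ?_
  have hsin : 0 < sin θ := sin_pos_of_pos_of_lt_pi (ha.trans_lt hθ.1) (hθ.2.trans_lt hb)
  have hu : 0 < u θ := sqrt_pos.mpr (hpos θ hθ)
  have hroot : √((2 * K) ^ 2 - (v - u θ ^ 2) ^ 2) = 2 * K * sin θ := by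
    rw [sq_sqrt (hnonneg θ), ← sqrt_sq (by positivity : 0 ≤ 2 * K * sin θ)]
    congr 1
    linear_combination (-(2 * K) ^ 2) * sin_sq_add_cos_sq θ
  rw [hroot, abs_of_pos (by positivity), smul_eq_mul]
  field_simp
  rfl

theorem setIntegral_abs_preimage_arccos_comp_sqrt_sub_mul_cos {K v c₀ c₁ : ℝ} (hK : 0 < K)
    (hKv : 2 * K ≤ v) (hc₀ : -1 < c₀) (hc₀₁ : c₀ ≤ c₁) (hc₁ : c₁ ≤ 1) (g : ℝ → ℝ) :
    ∫ θ in abs ⁻¹' Icc (arccos c₁) (arccos c₀), g √(v - 2 * K * cos θ) =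
      2 * ∫ r in √(v - 2 * K * c₁)..√(v - 2 * K * c₀),
        g r * (2 * r / √((2 * K) ^ 2 - (v - r ^ 2) ^ 2)) := by
  rw [setIntegral_abs_preimage_Icc_of_even (arccos_nonneg _) _ fun θ => by rw [cos_neg],
    setIntegral_Icc_comp_sqrt_sub_mul_cos hK hKv (arccos_nonneg _) (arccos_le_arccos hc₀₁)
      (arccos_lt_pi.mpr hc₀), cos_arccos (by linarith) hc₁, cos_arccos hc₀.le (hc₀₁.trans hc₁)]

noncomputable def equatorialCircle (R θ : ℝ) : EuclideanSpace ℝ (Fin 3) :=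
  !₂[R * cos θ, R * sin θ, 0]

noncomputable def longitude (x : EuclideanSpace ℝ (Fin 3)) : ℝ :=
  Complex.arg (x 0 + x 1 * Complex.I)

@[simp] lemma equatorialCircle_apply_zero (R θ : ℝ) : equatorialCircle R θ 0 = R * cos θ := rfl
@[simp] lemma equatorialCircle_apply_one (R θ : ℝ) : equatorialCircle R θ 1 = R * sin θ := rfl
@[simp] lemma equatorialCircle_apply_two (R θ : ℝ) : equatorialCircle R θ 2 = 0 := rfl

lemma continuous_equatorialCircle (R : ℝ) : Continuous (equatorialCircle R) :=
  (PiLp.continuous_toLp 2 _).comp (continuous_pi fun i => by fin_cases i <;> simp <;> fun_prop)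

lemma measurable_longitude : Measurable longitude := by
  unfold longitude; fun_prop

lemma inner_equatorialCircle (R θ : ℝ) (y : EuclideanSpace ℝ (Fin 3)) :
    ⟪equatorialCircle R θ, y⟫ = R * (cos θ * y 0 + sin θ * y 1) := by
  simp [PiLp.inner_apply, Fin.sum_univ_three, equatorialCircle]
  ring

lemma norm_equatorialCircle {R : ℝ} (hR : 0 ≤ R) (θ : ℝ) : ‖equatorialCircle R θ‖ = R := by
  rw [← sq_eq_sq₀ (norm_nonneg _) hR, ← real_inner_self_eq_norm_sq, inner_equatorialCircle]
  simp only [equatorialCircle_apply_zero, equatorialCircle_apply_one]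
  linear_combination R ^ 2 * sin_sq_add_cos_sq θ

lemma dist_equatorialCircle {R : ℝ} (hR : 0 ≤ R) (θ θ' : ℝ) :
    dist (equatorialCircle R θ) (equatorialCircle R θ') = 2 * R * |sin ((θ - θ') / 2)| := by
  rw [dist_eq_norm, ← sq_eq_sq₀ (norm_nonneg _) (by positivity), norm_sub_sq_real,
    inner_equatorialCircle, norm_equatorialCircle hR, norm_equatorialCircle hR, mul_pow, sq_abs]
  simp only [equatorialCircle_apply_zero, equatorialCircle_apply_one]
  have h := cos_two_mul' ((θ - θ') / 2)
  rw [mul_div_cancel₀ _ two_ne_zero, cos_sub] at h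
  linear_combination (-2 * R ^ 2) * h - 2 * R ^ 2 * sin_sq_add_cos_sq ((θ - θ') / 2)

lemma lipschitzWith_equatorialCircle (R : ℝ≥0) : LipschitzWith R (equatorialCircle R) :=
  LipschitzWith.of_dist_le_mul fun θ θ' => by
    rw [dist_equatorialCircle R.coe_nonneg, Real.dist_eq]
    calc 2 * R * |sin ((θ - θ') / 2)| ≤ 2 * R * |(θ - θ') / 2| := by
          gcongr ?_ * ?_; exact abs_sin_le_abs
      _ = R * |θ - θ'| := by rw [abs_div, abs_two]; ring

lemma mul_dist_sub_le_dist_equatorialCircle {R : ℝ} (hR : 0 ≤ R) (θ θ' : ℝ) :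
    R * dist θ θ' - R * dist θ θ' ^ 3 / 24 ≤
      dist (equatorialCircle R θ) (equatorialCircle R θ') := by
  rw [dist_equatorialCircle hR, Real.dist_eq]
  have h := abs_sub_sin_le ((θ - θ') / 2)
  rw [abs_div, abs_two] at h
  have h' : |(θ - θ')| / 2 - |θ - θ'| ^ 3 / 48 ≤ |sin ((θ - θ') / 2)| := by
    have := abs_sub_abs_le_abs_sub ((θ - θ') / 2) (sin ((θ - θ') / 2))
    rw [abs_div, abs_two] at this
    nlinarith [abs_nonneg (θ - θ')]
  nlinarith

lemma longitude_equatorialCircle {R θ : ℝ} (hR : 0 < R) (hθ : θ ∈ Ioc (-π) π) :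
    longitude (equatorialCircle R θ) = θ := by
  have : (equatorialCircle R θ 0 : ℂ) + equatorialCircle R θ 1 * Complex.I =
      R * (Complex.cos θ + Complex.sin θ * Complex.I) := by
    simp only [equatorialCircle_apply_zero, equatorialCircle_apply_one]
    push_cast; ring
  rw [longitude, this, Complex.arg_real_mul _ hR, Complex.arg_cos_add_sin_mul_I hθ]

lemma equatorialCircle_longitude {R : ℝ} {x : EuclideanSpace ℝ (Fin 3)} (hx : ‖x‖ = R)
    (hx2 : x 2 = 0) : equatorialCircle R (longitude x) = x := by
  set z : ℂ := x 0 + x 1 * Complex.I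
  have hz : ‖z‖ = R := by
    rw [← hx, ← sq_eq_sq₀ (norm_nonneg _) (norm_nonneg _), Complex.sq_norm,
      Complex.normSq_add_mul_I, EuclideanSpace.norm_eq, sq_sqrt (by positivity),
      Fin.sum_univ_three, hx2]
    simp
  ext i
  fin_cases i
  · simp [longitude, ← hz, Complex.norm_mul_cos_arg, z]
  · simp [longitude, ← hz, Complex.norm_mul_sin_arg, z]
  · simp [hx2]

lemma equatorialCircle_image_Ioc {R : ℝ} (hR : 0 < R) :
    equatorialCircle R '' Ioc (-π) π = {x | ‖x‖ = R ∧ x 2 = 0} := by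
  ext x
  constructor
  · rintro ⟨θ, -, rfl⟩
    exact ⟨norm_equatorialCircle hR.le θ, rfl⟩
  · rintro ⟨hx, hx2⟩
    exact ⟨longitude x, Complex.arg_mem_Ioc _, equatorialCircle_longitude hx hx2⟩

lemma exists_mul_dist_le_dist_equatorialCircle {R k : ℝ} (hR : 0 < R) (hk : k < R) :
    ∃ δ > 0, ∀ θ θ', dist θ θ' ≤ δ →
      k * dist θ θ' ≤ dist (equatorialCircle R θ) (equatorialCircle R θ') := by
  refine ⟨min 1 (24 * (R - k) / R), lt_min one_pos (by have := sub_pos.mpr hk; positivity),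
    fun θ θ' hδ => (le_trans ?_ (mul_dist_sub_le_dist_equatorialCircle hR.le θ θ'))⟩
  have h1 : dist θ θ' ≤ 1 := hδ.trans (min_le_left _ _)
  have h2 : R * dist θ θ' ≤ 24 * (R - k) := by
    rw [← le_div_iff₀' hR]; exact hδ.trans (min_le_right _ _)
  have h0 := dist_nonneg (x := θ) (y := θ')
  nlinarith [mul_le_mul_of_nonneg_left h1 (mul_nonneg hR.le h0), mul_nonneg h0 h0]

theorem setIntegral_image_equatorialCircle {R a b : ℝ} (hR : 0 < R) (ha : -π < a) (hb : b ≤ π)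
    {T : Set ℝ} (hT : MeasurableSet T) (hTab : T ⊆ Icc a b)
    {g : EuclideanSpace ℝ (Fin 3) → ℝ} (hg : Measurable g) :
    ∫ x in equatorialCircle R '' T, g x ∂μH[1] = R * ∫ θ in T, g (equatorialCircle R θ) := by
  have hR' : (R.toNNReal : ℝ) = R := Real.coe_toNNReal R hR.le
  have h := setIntegral_hausdorffMeasure_image (R := R.toNNReal) (continuous_equatorialCircle R)
    measurable_longitude
    (fun θ hθ => longitude_equatorialCircle hR ⟨ha.trans_le hθ.1, hθ.2.trans hb⟩)
    (by simpa only [hR'] using (lipschitzWith_equatorialCircle R.toNNReal).lipschitzOnWith)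
    (fun k hk => by
      obtain ⟨δ, hδ, h⟩ :=
        exists_mul_dist_le_dist_equatorialCircle hR (hR' ▸ NNReal.coe_lt_coe.mpr hk)
      exact ⟨δ, hδ, fun θ _ θ' _ => h θ θ'⟩)
    hT hTab hg
  rwa [hR'] at h

lemma inner_equatorialCircle_sub_self {R : ℝ} (θ : ℝ) {y : EuclideanSpace ℝ (Fin 3)}
    (hy : y 1 = 0) : ⟪equatorialCircle R θ - y, y⟫ = R * y 0 * cos θ - ‖y‖ ^ 2 := by
  rw [inner_sub_left, inner_equatorialCircle, hy, real_inner_self_eq_norm_sq]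
  ring

lemma norm_equatorialCircle_sub_sq {R : ℝ} (hR : 0 ≤ R) (θ : ℝ) {y : EuclideanSpace ℝ (Fin 3)}
    (hy : y 1 = 0) : ‖equatorialCircle R θ - y‖ ^ 2 = R ^ 2 + ‖y‖ ^ 2 - 2 * (R * y 0) * cos θ := by
  rw [norm_sub_sq_real, norm_equatorialCircle hR, inner_equatorialCircle, hy]
  ring

theorem visible_equatorialCircle_eq_image {R r₀ : ℝ} {y : EuclideanSpace ℝ (Fin 3)} (hR : 0 < R)
    (hy : y 1 = 0) (hK : 0 < R * y 0) (hr₀ : 0 ≤ r₀) :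
    {x ∈ {x : EuclideanSpace ℝ (Fin 3) | ‖x‖ = R ∧ x 2 = 0} | ⟪x - y, y⟫ ≥ 0 ∧ ‖x - y‖ ≥ r₀} =
      equatorialCircle R '' (Ioc (-π) π ∩
        cos ⁻¹' Icc (‖y‖ ^ 2 / (R * y 0)) ((R ^ 2 + ‖y‖ ^ 2 - r₀ ^ 2) / (2 * (R * y 0)))) := by
  have key : ∀ θ, (⟪equatorialCircle R θ - y, y⟫ ≥ 0 ∧ ‖equatorialCircle R θ - y‖ ≥ r₀) ↔
      cos θ ∈ Icc (‖y‖ ^ 2 / (R * y 0)) ((R ^ 2 + ‖y‖ ^ 2 - r₀ ^ 2) / (2 * (R * y 0))) :=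
      fun θ => by
    rw [inner_equatorialCircle_sub_self θ hy, ge_iff_le, ge_iff_le,
      ← pow_le_pow_iff_left₀ hr₀ (norm_nonneg _) two_ne_zero,
      norm_equatorialCircle_sub_sq hR.le θ hy, mem_Icc, div_le_iff₀ hK, le_div_iff₀ (by positivity)]
    constructor <;> rintro ⟨h₁, h₂⟩ <;> constructor <;> linarith
  rw [← equatorialCircle_image_Ioc hR]
  ext x
  constructor
  · rintro ⟨⟨θ, hθ, rfl⟩, hx⟩
    exact ⟨θ, ⟨hθ, (key θ).mp hx⟩, rfl⟩
  · rintro ⟨θ, ⟨hθ, hcos⟩, rfl⟩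
    exact ⟨⟨θ, hθ, rfl⟩, (key θ).mpr hcos⟩

theorem setIntegral_visible_equatorialCircle {R r₀ : ℝ} {y : EuclideanSpace ℝ (Fin 3)}
    (hR : 0 < R) (hy₁ : y 1 = 0) (hy₀ : 0 < y 0) (hr₀ : 0 ≤ r₀)
    (hmin : R ^ 2 + ‖y‖ ^ 2 - 2 * (R * y 0) ≤ r₀ ^ 2) (hmax : r₀ ^ 2 ≤ R ^ 2 - ‖y‖ ^ 2)
    {f : ℝ → ℝ} (hf : Continuous f) :
    ∫ x in {x ∈ {x : EuclideanSpace ℝ (Fin 3) | ‖x‖ = R ∧ x 2 = 0} | ⟪x - y, y⟫ ≥ 0 ∧ ‖x - y‖ ≥ r₀},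
        f ‖x - y‖ ∂μH[1] =
      ∫ r in r₀..√(R ^ 2 - ‖y‖ ^ 2),
        f r * (4 * r * R / √((2 * (R * y 0)) ^ 2 - (R ^ 2 + ‖y‖ ^ 2 - r ^ 2) ^ 2)) := by
  have hK : 0 < R * y 0 := mul_pos hR hy₀
  rw [visible_equatorialCircle_eq_image hR hy₁ hK hr₀]
  set K := R * y 0
  set v := R ^ 2 + ‖y‖ ^ 2 with hv
  set c₀ := ‖y‖ ^ 2 / K
  set c₁ := (v - r₀ ^ 2) / (2 * K)
  have hc₀ : 0 ≤ c₀ := div_nonneg (sq_nonneg _) hK.le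
  have hc₀₁ : c₀ ≤ c₁ := by
    rw [div_le_div_iff₀ hK (by linarith)]
    nlinarith
  have hc₁ : c₁ ≤ 1 := by
    rw [div_le_one (by linarith)]
    linarith
  have hKv : 2 * K ≤ v := by
    have h := norm_equatorialCircle_sub_sq hR.le 0 hy₁
    rw [cos_zero, mul_one] at h
    linarith [sq_nonneg ‖equatorialCircle R 0 - y‖]
  have hint : ∀ θ, f ‖equatorialCircle R θ - y‖ = f √(v - 2 * K * cos θ) := fun θ => by
    rw [← norm_equatorialCircle_sub_sq hR.le θ hy₁, sqrt_sq (norm_nonneg _)]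
  have hlo : √(v - 2 * K * c₁) = r₀ := by
    rw [mul_div_cancel₀ _ (by linarith), sub_sub_cancel, sqrt_sq hr₀]
  have hhi : √(v - 2 * K * c₀) = √(R ^ 2 - ‖y‖ ^ 2) := by
    rw [mul_assoc, mul_div_cancel₀ _ hK.ne', hv]
    ring_nf
  rw [Ioc_inter_cos_preimage_Icc (by linarith) (hc₀₁.trans hc₁) (by linarith),
    setIntegral_image_equatorialCircle hR (neg_lt_neg (arccos_lt_pi.mpr (by linarith)))
      (arccos_le_pi _) (measurableSet_Icc.preimage continuous_abs.measurable)
      (fun θ hθ => abs_le.mp hθ.2) (g := fun x => f ‖x - y‖)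
      (hf.comp (continuous_norm.comp (continuous_sub_right y))).measurable]
  simp_rw [hint]
  rw [setIntegral_abs_preimage_arccos_comp_sqrt_sub_mul_cos hK hKv (by linarith) hc₀₁ hc₁, hlo,
    hhi, ← intervalIntegral.integral_const_mul, ← intervalIntegral.integral_const_mul]
  congr 1
  ext r
  ring

theorem geo_interference_change_of_variables_general
    (r_E a_G φ : ℝ) (hr : 0 < r_E) (ha : 0 < a_G)
    (R_G : ℝ) (hR : R_G = r_E + a_G)
    (hvis : R_G * Real.cos φ > r_E)
    (C_G : Set (EuclideanSpace ℝ (Fin 3)))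
    (hC : C_G = {x : EuclideanSpace ℝ (Fin 3) | ‖x‖ = R_G ∧ x 2 = 0})
    (t : EuclideanSpace ℝ (Fin 3))
    (ht : t = ![r_E * Real.cos φ, 0, r_E * Real.sin φ])
    (v₁ v₂ : ℝ)
    (hv₁ : v₁ = 4 * R_G ^ 2 * r_E ^ 2 * Real.cos φ ^ 2)
    (hv₂ : v₂ = R_G ^ 2 + r_E ^ 2)
    (r₀ : ℝ)
    (hr₀l : Real.sqrt ((R_G - r_E * Real.cos φ) ^ 2 + r_E ^ 2 * Real.sin φ ^ 2) ≤ r₀)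
    (hr₀u : r₀ ≤ Real.sqrt (a_G ^ 2 + 2 * a_G * r_E))
    (f : ℝ → ℝ) (hf : Continuous f) :
    ∫ x in {x ∈ C_G | ⟪x - t, t⟫ ≥ 0 ∧ ‖x - t‖ ≥ r₀}, f ‖x - t‖ ∂(μH[1])
      = ∫ r in r₀..Real.sqrt (a_G ^ 2 + 2 * a_G * r_E),
          f r * (4 * r * R_G / Real.sqrt (v₁ - (v₂ - r ^ 2) ^ 2)) := by
  have hRpos : 0 < R_G := by linarith
  have ht₀ : t 0 = r_E * cos φ := congrFun ht 0
  have ht₀pos : 0 < t 0 := ht₀ ▸ mul_pos hr (pos_of_mul_pos_right (hr.trans hvis) hRpos.le)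
  have htn : ‖t‖ ^ 2 = r_E ^ 2 := by
    rw [EuclideanSpace.norm_eq, sq_sqrt (by positivity), Fin.sum_univ_three]
    simp only [Real.norm_eq_abs, sq_abs, ht]
    simp
    linear_combination r_E ^ 2 * sin_sq_add_cos_sq φ
  have hr₀ : 0 ≤ r₀ := (sqrt_nonneg _).trans hr₀l
  have hrmin : (R_G - r_E * cos φ) ^ 2 + r_E ^ 2 * sin φ ^ 2 =
      R_G ^ 2 + ‖t‖ ^ 2 - 2 * (R_G * t 0) := by
    rw [htn, ht₀]
    linear_combination r_E ^ 2 * sin_sq_add_cos_sq φ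
  have hrmax : a_G ^ 2 + 2 * a_G * r_E = R_G ^ 2 - ‖t‖ ^ 2 := by rw [htn, hR]; ring
  rw [hrmin, sqrt_le_left hr₀] at hr₀l
  rw [hrmax] at hr₀u ⊢
  rw [le_sqrt hr₀ (by rw [← hrmax]; positivity)] at hr₀u
  rw [show v₁ = (2 * (R_G * t 0)) ^ 2 by rw [hv₁, ht₀]; ring, hv₂, ← htn, hC]
  exact setIntegral_visible_equatorialCircle hRpos (congrFun ht 1) ht₀pos hr₀ hr₀l hr₀u hf

/-- Change of variables for the GEO interference integral in Lemma 4: with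
`v₁ = 4·R_G²·r_E²·cos² φ`, `v₂ = R_G² + r_E²`, `R_G·cos φ > r_E`,
`r_min^G(φ) = √((R_G − r_E cos φ)² + r_E² sin² φ) ≤ r₀ ≤ r_vis,max^G = √(a_G² + 2·a_G·r_E)`,
and `f` continuous, the integral of `f(‖x − t‖)` over the visible points of the
geostationary orbit at distance at least `r₀` (w.r.t. the 1-dimensional Hausdorff measure)
equals `∫_{r₀}^{r_vis,max^G} f(r)·4·r·R_G/√(v₁ − (v₂ − r²)²) dr`. -/
theorem geo_interference_change_of_variables
    (r_E a_G φ : ℝ) (hr : 0 < r_E) (ha : 0 < a_G)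
    (hφ : φ ∈ Set.Ioo (-(π / 2)) (π / 2))
    (R_G : ℝ) (hR : R_G = r_E + a_G)
    (hvis : R_G * Real.cos φ > r_E)
    (C_G : Set (EuclideanSpace ℝ (Fin 3)))
    (hC : C_G = {x : EuclideanSpace ℝ (Fin 3) | ‖x‖ = R_G ∧ x 2 = 0})
    (t : EuclideanSpace ℝ (Fin 3))
    (ht : t = ![r_E * Real.cos φ, 0, r_E * Real.sin φ])
    (v₁ v₂ : ℝ)
    (hv₁ : v₁ = 4 * R_G ^ 2 * r_E ^ 2 * Real.cos φ ^ 2)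
    (hv₂ : v₂ = R_G ^ 2 + r_E ^ 2)
    (r₀ : ℝ)
    (hr₀l : Real.sqrt ((R_G - r_E * Real.cos φ) ^ 2 + r_E ^ 2 * Real.sin φ ^ 2) ≤ r₀)
    (hr₀u : r₀ ≤ Real.sqrt (a_G ^ 2 + 2 * a_G * r_E))
    (f : ℝ → ℝ) (hf : Continuous f) :
    ∫ x in {x ∈ C_G | ⟪x - t, t⟫ ≥ 0 ∧ ‖x - t‖ ≥ r₀}, f ‖x - t‖ ∂(μH[1])
      = ∫ r in r₀..Real.sqrt (a_G ^ 2 + 2 * a_G * r_E),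
          f r * (4 * r * R_G / Real.sqrt (v₁ - (v₂ - r ^ 2) ^ 2)) :=
  geo_interference_change_of_variables_general r_E a_G φ hr ha R_G hR hvis C_G hC t ht v₁ v₂ hv₁ hv₂
    r₀ hr₀l hr₀u f hf
end
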